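/- For every finite pointed model M and k ≥ 0, the rooted k-contraction of M is k-bisimilar to M. Moreover, the relations Z_h = {(x, [x']_{b(x')}) | x' ∈ maxRepr(W), x' ∼_h x, and b(x) ≥ h} for 0 ≤ h ≤ k form a k-bisimulation witnessing this. -/

import Mathlib

/-- A finite pointed Kripke model with modality indices `I` and atoms `P`. -/
structure PModel (I P : Type) where
  W : Type
  fin : Finite W
  R : I → W → W → Prop
  V : P → W → Prop
  d : W

variable {I P : Type}

/-- `h`-bisimilarity between worlds of two models (back-and-forth to depth `h`). -/
def Bisim (M N : PModel I P) : ℕ → M.W → N.W → Prop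
  | 0, w, v => ∀ p, M.V p w ↔ N.V p v
  | h+1, w, v => (∀ p, M.V p w ↔ N.V p v)
      ∧ (∀ i w', M.R i w w' → ∃ v', N.R i v v' ∧ Bisim M N h w' v')
      ∧ (∀ i v', N.R i v v' → ∃ w', M.R i w w' ∧ Bisim M N h w' v')

/-- `k`-bisimilarity of pointed models. -/
def PBisim (k : ℕ) (M N : PModel I P) : Prop := Bisim M N k M.d N.d

/-- Directed paths of length `n`. -/
def Steps (M : PModel I P) : ℕ → M.W → M.W → Prop
  | 0, w, v => w = v
  | n+1, w, v => ∃ u i, M.R i w u ∧ Steps M n u v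

/-- Depth of a world: length of a shortest path from the designated world (`⊤` if none). -/
noncomputable def depth (M : PModel I P) (w : M.W) : ℕ∞ :=
  sInf {n : ℕ∞ | ∃ m : ℕ, n = (m : ℕ∞) ∧ Steps M m M.d w}

/-- Bound `b(w) = k − d(w)`, with `⊥` for unreachable worlds. -/
noncomputable def bound (k : ℕ) (M : PModel I P) (w : M.W) : WithBot ℤ :=
  ENat.recTopCoe (⊥ : WithBot ℤ) (fun n : ℕ => (((k : ℤ) - n : ℤ) : WithBot ℤ)) (depth M w)

/-- The bound as a natural number (meaningful when `0 ≤ bound k M w`). -/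
noncomputable def nbound (k : ℕ) (M : PModel I P) (w : M.W) : ℕ :=
  k - (depth M w).toNat
/-- `x` represents `y` : `b(x) ≥ b(y) ≥ 0` and `x ∼_{b(y)} y`. -/
noncomputable def Repr' (k : ℕ) (M : PModel I P) (x y : M.W) : Prop :=
  0 ≤ bound k M y ∧ bound k M y ≤ bound k M x ∧ Bisim M M (nbound k M y) x y

/-- `x` strictly represents `y`. -/
noncomputable def SRepr (k : ℕ) (M : PModel I P) (x y : M.W) : Prop :=
  Repr' k M x y ∧ bound k M y < bound k M x

/-- Maximal representatives. -/
noncomputable def maxRepr (k : ℕ) (M : PModel I P) : Set M.W :=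
  {x | 0 ≤ bound k M x ∧ ∀ y, ¬ SRepr k M y x}

/-- Representative class `[x]_{b(x)}`. -/
noncomputable def reprClass (k : ℕ) (M : PModel I P) (x : M.W) : Set M.W :=
  {y | Bisim M M (nbound k M x) x y}

lemma depth_d (M : PModel I P) : depth M M.d = 0 := by
  have h0 : (0 : ℕ∞) ∈ {n : ℕ∞ | ∃ m : ℕ, n = (m : ℕ∞) ∧ Steps M m M.d M.d} :=
    ⟨0, by simp, rfl⟩
  have := sInf_le h0
  simpa [depth, le_zero_iff] using this

lemma bound_d (k : ℕ) (M : PModel I P) : bound k M M.d = ((k : ℤ) : WithBot ℤ) := by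
  have h := depth_d M
  simp only [bound, h, ENat.recTopCoe_zero]
  norm_num

lemma bound_le (k : ℕ) (M : PModel I P) (w : M.W) : bound k M w ≤ ((k : ℤ) : WithBot ℤ) := by
  simp only [bound]
  by_cases hd : depth M w = ⊤
  · simp [hd]
  · lift depth M w to ℕ using hd with n hn
    simp only [ENat.recTopCoe_coe]
    exact_mod_cast (by omega : (k : ℤ) - n ≤ (k:ℤ))

lemma d_mem_maxRepr (k : ℕ) (M : PModel I P) : M.d ∈ maxRepr k M := by
  constructor
  · rw [bound_d]; exact_mod_cast Int.ofNat_nonneg k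
  · rintro y ⟨_, hlt⟩
    exact absurd (lt_of_lt_of_le hlt (bound_le k M y)) (by rw [bound_d]; exact lt_irrefl _)

/-- Carrier of the rooted k-contraction: representative classes of maximal representatives. -/
def ContrW (k : ℕ) (M : PModel I P) : Type :=
  {S : Set M.W // ∃ x ∈ maxRepr k M, S = reprClass k M x}

instance (k : ℕ) (M : PModel I P) : Finite (ContrW k M) := by
  have := M.fin
  exact Subtype.finite

/-- The rooted `k`-contraction. -/
noncomputable def rootedContraction (k : ℕ) (M : PModel I P) : PModel I P where
  W := ContrW k M
  fin := inferInstance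
  R := fun i S T => ∃ x ∈ maxRepr k M, ∃ y ∈ maxRepr k M,
        S.1 = reprClass k M x ∧ T.1 = reprClass k M y ∧
        0 < bound k M x ∧ ∃ z, M.R i x z ∧ Bisim M M (nbound k M x - 1) y z
  V := fun p S => ∃ x ∈ maxRepr k M, S.1 = reprClass k M x ∧ M.V p x
  d := ⟨reprClass k M M.d, M.d, d_mem_maxRepr k M, rfl⟩

/-- A `k`-bisimulation between two pointed models, as a sequence of relations
`Z k ⊆ ... ⊆ Z 0` containing the designated pair and satisfying atom/forth/back. -/
def IsKBisim (M N : PModel I P) (k : ℕ) (Z : ℕ → M.W → N.W → Prop) : Prop :=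
  (∀ h h', h' ≤ h → h ≤ k → ∀ w v, Z h w v → Z h' w v) ∧
  Z k M.d N.d ∧
  (∀ w v, Z 0 w v → ∀ p, M.V p w ↔ N.V p v) ∧
  (∀ h, h + 1 ≤ k → ∀ w v, Z (h+1) w v →
      ∀ i w', M.R i w w' → ∃ v', N.R i v v' ∧ Z h w' v') ∧
  (∀ h, h + 1 ≤ k → ∀ w v, Z (h+1) w v →
      ∀ i v', N.R i v v' → ∃ w', M.R i w w' ∧ Z h w' v')

/-
A world `x` with `b(x) ≥ 0` is represented by a maximal representative: among its (finitely
many) representatives take one of largest bound; representation is transitive, so nothing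
strictly represents it. A maximal representative `x'` with `x' ∼_h x` and `b(x) ≥ h` has
`b(x') ≥ h`, for otherwise `x` would strictly represent `x'`. Hence in the forth and back steps
one may move from `x` to `x'`, take an `R_i`-step there, and land in the class of a maximal
representative of the successor, with every bound dropping by at most one.
-/

namespace Bisim

variable {M N O : PModel I P}

lemma atoms {h : ℕ} {w : M.W} {v : N.W} (hb : Bisim M N h w v) (p : P) : M.V p w ↔ N.V p v := by
  cases h with
  | zero => exact hb p
  | succ h => exact hb.1 p

lemma mono {h h' : ℕ} {w : M.W} {v : N.W} (hle : h' ≤ h) (hb : Bisim M N h w v) :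
    Bisim M N h' w v := by
  induction h generalizing h' w v with
  | zero => rwa [Nat.le_zero.mp hle]
  | succ h ih =>
    cases h' with
    | zero => exact hb.atoms
    | succ h' =>
      obtain ⟨hV, hforth, hback⟩ := hb
      have hle' : h' ≤ h := Nat.succ_le_succ_iff.mp hle
      refine ⟨hV, fun i w' hr => ?_, fun i v' hr => ?_⟩
      · obtain ⟨v', hv', hb'⟩ := hforth i w' hr
        exact ⟨v', hv', ih hle' hb'⟩
      · obtain ⟨w', hw', hb'⟩ := hback i v' hr
        exact ⟨w', hw', ih hle' hb'⟩

lemma refl (M : PModel I P) (h : ℕ) (w : M.W) : Bisim M M h w w := by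
  induction h generalizing w with
  | zero => exact fun _ => Iff.rfl
  | succ h ih => exact ⟨fun _ => Iff.rfl, fun _ w' hr => ⟨w', hr, ih w'⟩, fun _ v' hr => ⟨v', hr, ih v'⟩⟩

lemma symm {h : ℕ} {w : M.W} {v : N.W} (hb : Bisim M N h w v) : Bisim N M h v w := by
  induction h generalizing w v with
  | zero => exact fun p => (hb p).symm
  | succ h ih =>
    obtain ⟨hV, hforth, hback⟩ := hb
    refine ⟨fun p => (hV p).symm, fun i v' hr => ?_, fun i w' hr => ?_⟩
    · obtain ⟨w', hw', hb'⟩ := hback i v' hr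
      exact ⟨w', hw', ih hb'⟩
    · obtain ⟨v', hv', hb'⟩ := hforth i w' hr
      exact ⟨v', hv', ih hb'⟩

lemma trans {h : ℕ} {w : M.W} {v : N.W} {u : O.W} (h₁ : Bisim M N h w v) (h₂ : Bisim N O h v u) :
    Bisim M O h w u := by
  induction h generalizing w v u with
  | zero => exact fun p => (h₁ p).trans (h₂ p)
  | succ h ih =>
    refine ⟨fun p => (h₁.1 p).trans (h₂.1 p), fun i w' hr => ?_, fun i u' hr => ?_⟩
    · obtain ⟨v', hv', hb₁⟩ := h₁.2.1 i w' hr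
      obtain ⟨u', hu', hb₂⟩ := h₂.2.1 i v' hv'
      exact ⟨u', hu', ih hb₁ hb₂⟩
    · obtain ⟨v', hv', hb₂⟩ := h₂.2.2 i u' hr
      obtain ⟨w', hw', hb₁⟩ := h₁.2.2 i v' hv'
      exact ⟨w', hw', ih hb₁ hb₂⟩

end Bisim

lemma IsKBisim.pBisim {M N : PModel I P} {k : ℕ} {Z : ℕ → M.W → N.W → Prop}
    (hZ : IsKBisim M N k Z) : PBisim k M N := by
  obtain ⟨hmono, hd, hatoms, hforth, hback⟩ := hZ
  suffices H : ∀ h ≤ k, ∀ w v, Z h w v → Bisim M N h w v from H k le_rfl _ _ hd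
  intro h
  induction h with
  | zero => exact fun _ => hatoms
  | succ h ih =>
    intro hk w v hz
    refine ⟨hatoms w v (hmono _ 0 h.succ.zero_le hk w v hz), fun i w' hr => ?_, fun i v' hr => ?_⟩
    · obtain ⟨v', hv', hz'⟩ := hforth h hk w v hz i w' hr
      exact ⟨v', hv', ih (by omega) w' v' hz'⟩
    · obtain ⟨w', hw', hz'⟩ := hback h hk w v hz i v' hr
      exact ⟨w', hw', ih (by omega) w' v' hz'⟩

section Depth

variable {M : PModel I P}

lemma Steps.snoc {m : ℕ} {w x y : M.W} {i : I} (hs : Steps M m w x) (hr : M.R i x y) :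
    Steps M (m + 1) w y := by
  induction m generalizing w with
  | zero => exact ⟨y, i, (hs : w = x) ▸ hr, rfl⟩
  | succ m ih =>
    obtain ⟨u, j, hj, hs⟩ := hs
    exact ⟨u, j, hj, ih hs⟩

lemma depth_le_of_steps {m : ℕ} {w : M.W} (hs : Steps M m M.d w) : depth M w ≤ m :=
  sInf_le ⟨m, rfl, hs⟩

lemma exists_steps_of_depth_ne_top {w : M.W} (hw : depth M w ≠ ⊤) :
    ∃ m : ℕ, depth M w = m ∧ Steps M m M.d w := by
  have hne : {n : ℕ∞ | ∃ m : ℕ, n = m ∧ Steps M m M.d w}.Nonempty := by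
    by_contra hempty
    exact hw (by rw [depth, Set.not_nonempty_iff_eq_empty.mp hempty, sInf_empty])
  exact csInf_mem hne

lemma depth_le_depth_add_one {i : I} {x y : M.W} (hr : M.R i x y) :
    depth M y ≤ depth M x + 1 := by
  by_cases hx : depth M x = ⊤
  · simp [hx]
  obtain ⟨m, hm, hs⟩ := exists_steps_of_depth_ne_top hx
  rw [hm]
  exact_mod_cast depth_le_of_steps (hs.snoc hr)

end Depth

section Bound

variable {k : ℕ} {M : PModel I P}

lemma coe_le_bound_iff_depth {w : M.W} {h : ℕ} :
    ((h : ℤ) : WithBot ℤ) ≤ bound k M w ↔ depth M w + h ≤ k := by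
  rw [bound]
  induction depth M w using ENat.recTopCoe with
  | top => simp
  | coe n =>
    rw [ENat.recTopCoe_natCast, WithBot.coe_le_coe, ← Nat.cast_add, Nat.cast_le]
    omega

lemma bound_eq_nbound {w : M.W} (hw : 0 ≤ bound k M w) :
    bound k M w = ((nbound k M w : ℤ) : WithBot ℤ) := by
  have hdk : depth M w ≤ k := by
    simpa using coe_le_bound_iff_depth.mp (show ((0 : ℕ) : ℤ) ≤ bound k M w from hw)
  obtain ⟨n, hn, -⟩ := exists_steps_of_depth_ne_top (ne_top_of_le_ne_top (ENat.natCast_ne_top k) hdk)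
  rw [hn, Nat.cast_le] at hdk
  simp only [bound, nbound, hn, ENat.recTopCoe_natCast, ENat.toNat_natCast]
  norm_cast

lemma coe_le_bound_iff {w : M.W} {h : ℕ} :
    ((h : ℤ) : WithBot ℤ) ≤ bound k M w ↔ 0 ≤ bound k M w ∧ h ≤ nbound k M w := by
  constructor
  · intro hw
    have hw0 : 0 ≤ bound k M w := le_trans (by exact_mod_cast h.cast_nonneg) hw
    rw [bound_eq_nbound hw0] at hw
    exact ⟨hw0, by exact_mod_cast hw⟩
  · rintro ⟨hw0, hh⟩
    rw [bound_eq_nbound hw0]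
    exact_mod_cast hh

lemma bound_le_bound_iff {x y : M.W} (hx : 0 ≤ bound k M x) (hy : 0 ≤ bound k M y) :
    bound k M x ≤ bound k M y ↔ nbound k M x ≤ nbound k M y := by
  rw [bound_eq_nbound hx, bound_eq_nbound hy]
  norm_cast

lemma bound_lt_bound_iff {x y : M.W} (hx : 0 ≤ bound k M x) (hy : 0 ≤ bound k M y) :
    bound k M x < bound k M y ↔ nbound k M x < nbound k M y :=
  lt_iff_lt_of_le_iff_le (bound_le_bound_iff hy hx)

lemma coe_le_bound_of_R {i : I} {x y : M.W} {h : ℕ} (hr : M.R i x y)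
    (hx : (((h + 1 : ℕ) : ℤ) : WithBot ℤ) ≤ bound k M x) : ((h : ℤ) : WithBot ℤ) ≤ bound k M y := by
  rw [coe_le_bound_iff_depth] at hx ⊢
  calc depth M y + h ≤ depth M x + 1 + h := by gcongr; exact depth_le_depth_add_one hr
    _ = depth M x + (h + 1 : ℕ) := by push_cast; ring
    _ ≤ k := hx

end Bound

section Representatives

variable {k : ℕ} {M : PModel I P}

lemma Repr'.refl {w : M.W} (hw : 0 ≤ bound k M w) : Repr' k M w w :=
  ⟨hw, le_rfl, Bisim.refl M _ w⟩

lemma Repr'.trans {x y z : M.W} (hxy : Repr' k M x y) (hyz : Repr' k M y z) : Repr' k M x z := by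
  obtain ⟨hy0, hyx, hbxy⟩ := hxy
  obtain ⟨hz0, hzy, hbyz⟩ := hyz
  have hle : nbound k M z ≤ nbound k M y := (bound_le_bound_iff hz0 hy0).mp hzy
  exact ⟨hz0, hzy.trans hyx, (hbxy.mono hle).trans hbyz⟩

lemma exists_mem_maxRepr_repr {w : M.W} (hw : 0 ≤ bound k M w) :
    ∃ y ∈ maxRepr k M, Repr' k M y w := by
  have := M.fin
  obtain ⟨y, hyw, hmax⟩ := (Set.toFinite {y | Repr' k M y w}).exists_maximalFor (bound k M) _
    ⟨w, Repr'.refl hw⟩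
  exact ⟨y, ⟨hw.trans hyw.2.1, fun u ⟨hu, hlt⟩ => hlt.not_ge (hmax (hu.trans hyw) hlt.le)⟩, hyw⟩

lemma le_nbound_of_mem_maxRepr {x' x : M.W} {h : ℕ} (hx' : x' ∈ maxRepr k M)
    (hb : Bisim M M h x' x) (hx : ((h : ℤ) : WithBot ℤ) ≤ bound k M x) : h ≤ nbound k M x' := by
  obtain ⟨hx0, hhx⟩ := coe_le_bound_iff.mp hx
  by_contra! hlt
  have hlt' : nbound k M x' < nbound k M x := hlt.trans_le hhx
  exact hx'.2 x ⟨⟨hx'.1, (bound_le_bound_iff hx'.1 hx0).mpr hlt'.le, (hb.mono hlt.le).symm⟩,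
    (bound_lt_bound_iff hx'.1 hx0).mpr hlt'⟩

lemma bisim_of_reprClass_eq {x' x'' : M.W} (he : reprClass k M x' = reprClass k M x'') :
    Bisim M M (nbound k M x') x' x'' :=
  (he ▸ Bisim.refl M _ x'' : x'' ∈ reprClass k M x')

end Representatives

/-- The relation `Z_h` of the theorem. -/
def contractionRel (k : ℕ) (M : PModel I P) (h : ℕ) (x : M.W)
    (S : (rootedContraction k M).W) : Prop :=
  ∃ x' ∈ maxRepr k M, S.1 = reprClass k M x' ∧
    Bisim M M h x' x ∧ ((h : ℤ) : WithBot ℤ) ≤ bound k M x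

section Contraction

variable {k : ℕ} {M : PModel I P}

lemma exists_rootedContraction_R {i : I} {x' z : M.W} {S : (rootedContraction k M).W}
    (hx' : x' ∈ maxRepr k M) (hS : S.1 = reprClass k M x') (hpos : 0 < nbound k M x')
    (hr : M.R i x' z) :
    ∃ T : (rootedContraction k M).W, (rootedContraction k M).R i S T ∧
      ∃ y' ∈ maxRepr k M, T.1 = reprClass k M y' ∧ Bisim M M (nbound k M x' - 1) y' z := by
  have hz : (((nbound k M x' - 1 : ℕ) : ℤ) : WithBot ℤ) ≤ bound k M z := by
    refine coe_le_bound_of_R hr ?_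
    rw [Nat.sub_add_cancel hpos, bound_eq_nbound hx'.1]
  obtain ⟨hz0, hle⟩ := coe_le_bound_iff.mp hz
  obtain ⟨y', hy', -, -, hbyz⟩ := exists_mem_maxRepr_repr hz0
  have hx'pos : 0 < bound k M x' := by
    rw [bound_eq_nbound hx'.1]
    exact_mod_cast hpos
  exact ⟨⟨reprClass k M y', y', hy', rfl⟩, ⟨x', hx', y', hy', hS, rfl, hx'pos, z, hr, hbyz.mono hle⟩,
    y', hy', rfl, hbyz.mono hle⟩

lemma contractionRel_mono {h h' : ℕ} {x : M.W} {S : (rootedContraction k M).W} (hle : h' ≤ h)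
    (hZ : contractionRel k M h x S) : contractionRel k M h' x S := by
  obtain ⟨x', hx', hS, hb, hx⟩ := hZ
  exact ⟨x', hx', hS, hb.mono hle, le_trans (by exact_mod_cast hle) hx⟩

lemma contractionRel_d : contractionRel k M k M.d (rootedContraction k M).d :=
  ⟨M.d, d_mem_maxRepr k M, rfl, Bisim.refl M k M.d, (bound_d k M).ge⟩

lemma contractionRel_atoms {x : M.W} {S : (rootedContraction k M).W}
    (hZ : contractionRel k M 0 x S) (p : P) : M.V p x ↔ (rootedContraction k M).V p S := by
  obtain ⟨x', hx', hS, hb, -⟩ := hZ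
  constructor
  · exact fun hV => ⟨x', hx', hS, (hb.atoms p).mpr hV⟩
  · rintro ⟨x'', -, hS'', hV⟩
    exact (hb.atoms p).mp (((bisim_of_reprClass_eq (hS ▸ hS'')).atoms p).mpr hV)

lemma contractionRel_forth {h : ℕ} {x x₁ : M.W} {S : (rootedContraction k M).W} {i : I}
    (hZ : contractionRel k M (h + 1) x S) (hr : M.R i x x₁) :
    ∃ T, (rootedContraction k M).R i S T ∧ contractionRel k M h x₁ T := by
  obtain ⟨x', hx', hS, hb, hx⟩ := hZ
  have hge : h + 1 ≤ nbound k M x' := le_nbound_of_mem_maxRepr hx' hb hx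
  obtain ⟨z, hrz, hbz⟩ := hb.2.2 i x₁ hr
  obtain ⟨T, hST, y', hy', hT, hbyz⟩ := exists_rootedContraction_R hx' hS (by omega) hrz
  exact ⟨T, hST, y', hy', hT, (hbyz.mono (by omega)).trans hbz, coe_le_bound_of_R hr hx⟩

lemma contractionRel_back {h : ℕ} {x : M.W} {S T : (rootedContraction k M).W} {i : I}
    (hZ : contractionRel k M (h + 1) x S) (hST : (rootedContraction k M).R i S T) :
    ∃ x₁, M.R i x x₁ ∧ contractionRel k M h x₁ T := by
  obtain ⟨x', hx', hS, hb, hx⟩ := hZ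
  obtain ⟨x'', hx'', y', hy', hS'', hT, -, z, hrz, hbyz⟩ := hST
  have hb'' : Bisim M M (h + 1) x'' x :=
    ((bisim_of_reprClass_eq (hS ▸ hS'')).mono (le_nbound_of_mem_maxRepr hx' hb hx)).symm.trans hb
  have hge : h + 1 ≤ nbound k M x'' := le_nbound_of_mem_maxRepr hx'' hb'' hx
  obtain ⟨x₁, hr, hbz⟩ := hb''.2.1 i z hrz
  exact ⟨x₁, hr, y', hy', hT, (hbyz.mono (by omega)).trans hbz, coe_le_bound_of_R hr hx⟩

lemma isKBisim_contractionRel : IsKBisim M (rootedContraction k M) k (contractionRel k M) :=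
  ⟨fun _ _ hle _ _ _ => contractionRel_mono hle, contractionRel_d,
    fun _ _ hZ => contractionRel_atoms hZ, fun _ _ _ _ hZ _ _ => contractionRel_forth hZ,
    fun _ _ _ _ hZ _ _ => contractionRel_back hZ⟩

end Contraction

/-- The rooted `k`-contraction is `k`-bisimilar to the original model, as witnessed
by the relations `Z h = {(x, [x']_{b(x')}) | x' ∈ maxRepr(W), x' ∼_h x, b(x) ≥ h}`. -/
theorem rootedContraction_k_bisim (k : ℕ) (M : PModel I P) :
    IsKBisim M (rootedContraction k M) k
      (fun h x S => ∃ x' ∈ maxRepr k M, S.1 = reprClass k M x' ∧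
        Bisim M M h x' x ∧ ((h : ℤ) : WithBot ℤ) ≤ bound k M x) ∧
    PBisim k M (rootedContraction k M) :=
  ⟨isKBisim_contractionRel, isKBisim_contractionRel.pBisim⟩
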